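/- Let Φ[f](x) = ∫_{ℝ²} f(x + M_f(x) t) φ(t) dt, where M_f(x) = A_{Λ_f(x)} R_{Γ_f(x)} is an invertible 2×2 matrix depending on f and x. Suppose that for a similarity transform T = A_s Y_u R_α the covariance conditions Λ_{L_T f}(x) = s · Λ_f(T⁻¹x) and Γ_{L_T f}(x) = Γ_f(T⁻¹x) + α hold for all x. Then Φ[L_T f](x) = (L_T Φ[f])(x) for all x; i.e., Φ is equivariant with respect to T. -/
import Mathlib


open Matrix Real MeasureTheory

noncomputable def rotMat10 (θ : ℝ) : Matrix (Fin 2) (Fin 2) ℝ :=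
  !![Real.cos θ, Real.sin θ; -Real.sin θ, Real.cos θ]

lemma rotMat10_mul (a b : ℝ) : rotMat10 a * rotMat10 b = rotMat10 (a + b) := by
  ext i j
  fin_cases i <;> fin_cases j <;>
    simp [rotMat10, Matrix.mul_apply, Fin.sum_univ_two, Real.cos_add, Real.sin_add] <;> ring

theorem stmt10
    (Λ : ((Fin 2 → ℝ) → ℂ) → (Fin 2 → ℝ) → ℝ)
    (Γ : ((Fin 2 → ℝ) → ℂ) → (Fin 2 → ℝ) → ℝ)
    (hΛpos : ∀ g x, 0 < Λ g x)
    (M : ((Fin 2 → ℝ) → ℂ) → (Fin 2 → ℝ) → Matrix (Fin 2) (Fin 2) ℝ)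
    (hM : ∀ g x, M g x = (Λ g x) • rotMat10 (Γ g x))
    (s α : ℝ) (hs : 0 < s) (u : Fin 2 → ℝ)
    (Tinv : (Fin 2 → ℝ) → (Fin 2 → ℝ))
    (hTinv : ∀ x, Tinv x = (1 / s) • (rotMat10 (-α)).mulVec (x - u))
    (f φ : (Fin 2 → ℝ) → ℂ)
    (hΛ : ∀ x, Λ (fun y => f (Tinv y)) x = s * Λ f (Tinv x))
    (hΓ : ∀ x, Γ (fun y => f (Tinv y)) x = Γ f (Tinv x) + α) :
    ∀ x : Fin 2 → ℝ,
      (∫ t : Fin 2 → ℝ, f (Tinv (x + (M (fun y => f (Tinv y)) x).mulVec t)) * φ t) =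
        ∫ t : Fin 2 → ℝ, f (Tinv x + (M f (Tinv x)).mulVec t) * φ t := by
  intro x
  have hs' : s ≠ 0 := ne_of_gt hs
  have key : ∀ t : Fin 2 → ℝ,
      Tinv (x + (M (fun y => f (Tinv y)) x).mulVec t) = Tinv x + (M f (Tinv x)).mulVec t := by
    intro t
    set L := Λ f (Tinv x) with hL
    set G := Γ f (Tinv x) with hG
    rw [hM, hM, hΛ x, hΓ x, ← hL, ← hG, hTinv (x + _), hTinv x]
    rw [smul_mulVec, smul_mulVec]
    have : x + (s * L) • (rotMat10 (G + α)).mulVec t - u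
        = (x - u) + (s * L) • (rotMat10 (G + α)).mulVec t := by
      abel
    rw [this, mulVec_add, mulVec_smul, mulVec_mulVec, rotMat10_mul, smul_add, smul_smul]
    have h2 : 1 / s * (s * L) = L := by field_simp
    rw [h2]
    congr 2
    ring
  exact integral_congr_ae (Filter.Eventually.of_forall fun t => by simp only [key])
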